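/- arXiv:2204.10134 — 5 statements merged into one kernel-verified Lean document; each statement's English description precedes it below -/
import Mathlib

section
/- For every integer n ≥ 6, the complement of the wheel graph W_n on n vertices (the join of a single vertex with a cycle on n−1 vertices) contains a complete graph on ⌊3(n−1)/4⌋ vertices as a minor. -/
/-!
The hub of `W n` is isolated in the complement, so we look for the minor in the complement of the
rim cycle `C m`, `m = n - 1`, using singletons and pairs as branch sets. Take the `s` singletons
`{0}, {2}, …, {2(s-1)}` and match the remaining `2p` labels `x₀ < … < x_{2p-1}` into the `p` pairs
`{x_l, x_{l+p}}`. When `s ≤ 2p` the singletons are pairwise non-adjacent on the cycle; when `p ≥ 2`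
no singleton is a cycle-neighbour of both ends of a pair; and two disjoint pairs always meet in the
complement once `m ≥ 5`, since the four cross edges would form a `4`-cycle in `C m`. With
`k = ⌊3m/4⌋`, the choice `s = 2k - m`, `p = m - k` meets these conditions.
-/

open SimpleGraph

/-- `H` is a minor of `G` (branch-set / minor-model definition): each vertex of `H`
is represented by a connected branch set in `G`, branch sets are pairwise disjoint,
and edges of `H` are realized by edges between the corresponding branch sets. -/
def IsMinorOf {α β : Type*} (H : SimpleGraph α) (G : SimpleGraph β) : Prop :=
  ∃ f : α → Set β,
    (∀ a, (G.induce (f a)).Connected) ∧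
    (∀ a b, a ≠ b → Disjoint (f a) (f b)) ∧
    (∀ a b, H.Adj a b → ∃ u ∈ f a, ∃ v ∈ f b, G.Adj u v)

/-- The wheel graph `W n` on `n` vertices: hub `none` joined to the cycle
`C (n-1)` on the rim vertices `some i`, `i : ZMod (n-1)`. -/
def wheelGraph (n : ℕ) : SimpleGraph (Option (ZMod (n - 1))) where
  Adj x y := x ≠ y ∧
    (x = none ∨ y = none ∨
      ∃ i j : ZMod (n - 1), x = some i ∧ y = some j ∧ (i - j = 1 ∨ j - i = 1))
  symm := ⟨by
    rintro x y ⟨hne, h⟩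
    refine ⟨hne.symm, ?_⟩
    rcases h with h | h | ⟨i, j, hx, hy, hij⟩
    · exact Or.inr (Or.inl h)
    · exact Or.inl h
    · exact Or.inr (Or.inr ⟨j, i, hy, hx, hij.symm⟩)⟩
  loopless := ⟨fun x h => h.1 rfl⟩

theorem SimpleGraph.induce_pair_connected {V : Type*} {G : SimpleGraph V} {x y : V}
    (h : x = y ∨ G.Adj x y) : (G.induce {x, y}).Connected := by
  rcases h with rfl | hxy
  · rw [Set.pair_eq_singleton, induce_singleton_eq_top]
    exact connected_top
  · exact induce_pair_connected_of_adj hxy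

theorem isMinorOf_top_of_pairs {ι V : Type*} {G : SimpleGraph V} (a b : ι → V)
    (hab : ∀ i, a i = b i ∨ G.Adj (a i) (b i))
    (hdisj : ∀ i j, i ≠ j → a i ≠ a j ∧ a i ≠ b j ∧ b i ≠ a j ∧ b i ≠ b j)
    (hcross : ∀ i j, i ≠ j →
      G.Adj (a i) (a j) ∨ G.Adj (a i) (b j) ∨ G.Adj (b i) (a j) ∨ G.Adj (b i) (b j)) :
    IsMinorOf (⊤ : SimpleGraph ι) G := by
  refine ⟨fun i => {a i, b i}, fun i => induce_pair_connected (hab i), fun i j hij => ?_,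
    fun i j hij => ?_⟩
  · obtain ⟨h₁, h₂, h₃, h₄⟩ := hdisj i j hij
    simp [h₁.symm, h₂.symm, h₃.symm, h₄.symm]
  · rcases hcross i j hij.ne with h | h | h | h <;> exact ⟨_, by simp, _, by simp, h⟩

theorem ZMod.natCast_eq_natCast_iff_of_lt {m x y : ℕ} (hx : x < m) (hy : y < m) :
    (x : ZMod m) = y ↔ x = y := by
  rw [ZMod.natCast_eq_natCast_iff', Nat.mod_eq_of_lt hx, Nat.mod_eq_of_lt hy]

theorem ZMod.natCast_sub_natCast_eq_one_iff {m x y : ℕ} (hx : x < m) (hy : y < m) :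
    (x - y : ZMod m) = 1 ↔ x = y + 1 ∨ (x = 0 ∧ y + 1 = m) := by
  rw [sub_eq_iff_eq_add', ← Nat.cast_one, ← Nat.cast_add, ZMod.natCast_eq_natCast_iff',
    Nat.mod_eq_of_lt hx]
  rcases Nat.lt_or_ge (y + 1) m with hlt | hge
  · rw [Nat.mod_eq_of_lt hlt]; omega
  · rw [show y + 1 = m by omega, Nat.mod_self]; omega

def CycleApart (m x y : ℕ) : Prop :=
  x ≠ y ∧ x ≠ y + 1 ∧ y ≠ x + 1 ∧ ¬(x = 0 ∧ y + 1 = m) ∧ ¬(y = 0 ∧ x + 1 = m)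

theorem wheelGraph_compl_adj_some_natCast {n x y : ℕ} (hx : x < n - 1) (hy : y < n - 1) :
    (wheelGraph n)ᶜ.Adj (some (x : ZMod (n - 1))) (some (y : ZMod (n - 1))) ↔
      CycleApart (n - 1) x y := by
  simp only [compl_adj, wheelGraph, ne_eq, Option.some.injEq, reduceCtorEq, false_or,
    exists_and_left, exists_eq_left', ZMod.natCast_eq_natCast_iff_of_lt hx hy,
    ZMod.natCast_sub_natCast_eq_one_iff hx hy, ZMod.natCast_sub_natCast_eq_one_iff hy hx,
    CycleApart]
  omega

namespace CycleComplModel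

/-- The `l`-th label not among the singletons `0, 2, …, 2(s-1)`. -/
def freeLabel (s l : ℕ) : ℕ := if l < s then 2 * l + 1 else s + l

/-- Branch set `i` of the model is `{fst s i, snd s p i}`. -/
def fst (s i : ℕ) : ℕ := if i < s then 2 * i else freeLabel s (i - s)

def snd (s p i : ℕ) : ℕ := if i < s then 2 * i else freeLabel s (i - s + p)

variable {s p i j : ℕ}

theorem fst_lt (hs : s ≤ 2 * p) (hi : i < s + p) : fst s i < s + 2 * p := by
  unfold fst freeLabel; split_ifs <;> omega

theorem snd_lt (hs : s ≤ 2 * p) (hi : i < s + p) : snd s p i < s + 2 * p := by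
  unfold snd freeLabel; split_ifs <;> omega

theorem fst_eq_snd_or_apart (hp : 2 ≤ p) (hi : i < s + p) :
    fst s i = snd s p i ∨ CycleApart (s + 2 * p) (fst s i) (snd s p i) := by
  unfold fst snd freeLabel; split_ifs <;> unfold CycleApart <;> omega

theorem ne_of_ne (hi : i < s + p) (hj : j < s + p) (hij : i ≠ j) :
    fst s i ≠ fst s j ∧ fst s i ≠ snd s p j ∧ snd s p i ≠ fst s j ∧ snd s p i ≠ snd s p j := by
  unfold fst snd freeLabel; split_ifs <;> omega

theorem cross_apart_of_ne (hp : 2 ≤ p) (hs : s ≤ 2 * p) (hm : 5 ≤ s + 2 * p)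
    (hi : i < s + p) (hj : j < s + p) (hij : i ≠ j) :
    CycleApart (s + 2 * p) (fst s i) (fst s j) ∨ CycleApart (s + 2 * p) (fst s i) (snd s p j) ∨
      CycleApart (s + 2 * p) (snd s p i) (fst s j) ∨
      CycleApart (s + 2 * p) (snd s p i) (snd s p j) := by
  unfold fst snd freeLabel; split_ifs <;> unfold CycleApart <;> omega

end CycleComplModel

open CycleComplModel in
theorem isMinorOf_top_wheelGraph_compl {s p : ℕ} (hp : 2 ≤ p) (hs : s ≤ 2 * p)
    (hm : 5 ≤ s + 2 * p) :
    IsMinorOf (⊤ : SimpleGraph (Fin (s + p))) (wheelGraph (s + 2 * p + 1))ᶜ := by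
  have adj {x y : ℕ} (hx : x < s + 2 * p) (hy : y < s + 2 * p) :
      (wheelGraph (s + 2 * p + 1))ᶜ.Adj (some (x : ZMod _)) (some (y : ZMod _)) ↔
        CycleApart (s + 2 * p) x y :=
    wheelGraph_compl_adj_some_natCast hx hy
  have eq {x y : ℕ} (hx : x < s + 2 * p) (hy : y < s + 2 * p) :
      some (x : ZMod (s + 2 * p + 1 - 1)) = some (y : ZMod _) ↔ x = y := by
    rw [Option.some_inj, ZMod.natCast_eq_natCast_iff_of_lt hx hy]
  have hf (i : Fin (s + p)) : fst s i < s + 2 * p := fst_lt hs i.2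
  have hg (i : Fin (s + p)) : snd s p i < s + 2 * p := snd_lt hs i.2
  refine isMinorOf_top_of_pairs (fun i => some (fst s i : ZMod _))
    (fun i => some (snd s p i : ZMod _)) (fun i => ?_) (fun i j hij => ?_) (fun i j hij => ?_)
  · rw [eq (hf i) (hg i), adj (hf i) (hg i)]
    exact fst_eq_snd_or_apart hp i.2
  · simp only [ne_eq, eq (hf i) (hf j), eq (hf i) (hg j), eq (hg i) (hf j), eq (hg i) (hg j)]
    exact ne_of_ne i.2 j.2 (Fin.val_ne_of_ne hij)
  · rw [adj (hf i) (hf j), adj (hf i) (hg j), adj (hg i) (hf j), adj (hg i) (hg j)]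
    exact cross_apart_of_ne hp hs hm i.2 j.2 (Fin.val_ne_of_ne hij)

/-- The complement of the wheel graph `W n` contains a `K ⌊3(n-1)/4⌋` minor, for `n ≥ 6`. -/
theorem wheel_compl_hadwiger_lb (n : ℕ) (hn : 6 ≤ n) :
    IsMinorOf (⊤ : SimpleGraph (Fin (3 * (n - 1) / 4))) (wheelGraph n)ᶜ := by
  obtain ⟨s, p, hp, hs, hm, rfl, hk⟩ : ∃ s p, 2 ≤ p ∧ s ≤ 2 * p ∧ 5 ≤ s + 2 * p ∧
      n = s + 2 * p + 1 ∧ 3 * (n - 1) / 4 = s + p :=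
    ⟨2 * (3 * (n - 1) / 4) - (n - 1), n - 1 - 3 * (n - 1) / 4, by omega, by omega, by omega,
      by omega, by omega⟩
  rw [hk]
  exact isMinorOf_top_wheelGraph_compl hp hs hm
end

section
/- For every integer t ≥ 6, the complement of the wheel graph W_{2t−3} on 2t−3 vertices contains the complete graph K_t as a minor. -/
open SimpleGraph

/-!
In the complement of `W_{2t-3}` the hub is isolated and the rim is the complement of the
cycle `C_{2m}`, `m = t - 2`. There, each antipodal pair `{j, j + m}` is an edge, and every vertex is
non-adjacent on the cycle to at least one end of every antipodal pair, so the `m` antipodal pairs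
are the branch sets of a `K_m` minor. Splitting the pairs at `0` and `2` into the four singletons
`0, 2, m, m + 2`, pairwise at cyclic distance at least `2` once `m ≥ 4`, gives `K_{m+2}`.
-/

lemma natCast_injOn_Iio (N : ℕ) : Set.InjOn (Nat.cast : ℕ → ZMod N) (Set.Iio N) := by
  intro a ha b hb h
  have := congrArg ZMod.val h
  rwa [ZMod.val_natCast_of_lt ha, ZMod.val_natCast_of_lt hb] at this

lemma natCast_sub_natCast_eq_one_iff {N a b : ℕ} (ha : a < N) (hb : b < N) :
    (a : ZMod N) - b = 1 ↔ a = b + 1 ∨ (a = 0 ∧ b + 1 = N) := by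
  rw [sub_eq_iff_eq_add', ← Nat.cast_one, ← Nat.cast_add, ZMod.natCast_eq_natCast_iff',
    Nat.mod_eq_of_lt ha]
  rcases (show b + 1 ≤ N by omega).lt_or_eq with h | h
  · rw [Nat.mod_eq_of_lt h]; omega
  · rw [h, Nat.mod_self]; omega

/-- The labels `a, b < N` are distinct and non-adjacent on the cycle `0, 1, …, N - 1`. -/
def CycleFar (N a b : ℕ) : Prop :=
  a ≠ b ∧ a + 1 ≠ b ∧ b + 1 ≠ a ∧ ¬(a = 0 ∧ b + 1 = N) ∧ ¬(b = 0 ∧ a + 1 = N)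

lemma CycleFar.symm {N a b : ℕ} (h : CycleFar N a b) : CycleFar N b a := by
  unfold CycleFar at *; omega

lemma cycleFar_or_cycleFar_add {m : ℕ} (hm : 3 ≤ m) (a j : ℕ) :
    CycleFar (2 * m) a j ∨ CycleFar (2 * m) a (j + m) := by
  unfold CycleFar; omega

def rimVertex (N a : ℕ) : Option (ZMod N) := some a

lemma rimVertex_injOn (N : ℕ) : Set.InjOn (rimVertex N) (Set.Iio N) :=
  (Option.some_injective _).comp_injOn (natCast_injOn_Iio N)

lemma compl_wheelGraph_adj_rimVertex {N a b : ℕ} (ha : a < N) (hb : b < N) :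
    (wheelGraph (N + 1))ᶜ.Adj (rimVertex N a) (rimVertex N b) ↔ CycleFar N a b := by
  simp only [compl_adj, wheelGraph, rimVertex, Option.some.injEq, reduceCtorEq, false_or,
    exists_and_left, exists_eq_left', ne_eq, (natCast_injOn_Iio N).eq_iff ha hb,
    natCast_sub_natCast_eq_one_iff ha hb, natCast_sub_natCast_eq_one_iff hb ha, CycleFar]
  omega

lemma IsMinorOf.top_of_equiv {α β γ : Type*} {G : SimpleGraph γ} (e : α ≃ β)
    (h : IsMinorOf (⊤ : SimpleGraph α) G) : IsMinorOf (⊤ : SimpleGraph β) G := by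
  obtain ⟨f, hconn, hdisj, hadj⟩ := h
  exact ⟨f ∘ e.symm, fun b => hconn _, fun a b hab => hdisj _ _ (e.symm.injective.ne hab),
    fun a b hab => hadj _ _ (e.symm.injective.ne hab)⟩

section BranchSets

variable {m : ℕ}

open Sum

def branchLabels (m : ℕ) : Fin m ⊕ Fin 2 → Set ℕ
  | inl j => if j.val = 0 ∨ j.val = 2 then {j.val} else {j.val, j.val + m}
  | inr i => {2 * i.val + m}

lemma branchLabels_nonempty (k : Fin m ⊕ Fin 2) : (branchLabels m k).Nonempty := by
  rcases k with j | i <;> simp only [branchLabels] <;> [split_ifs; skip] <;> simp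

lemma branchLabels_subset_Iio (hm : 3 ≤ m) (k : Fin m ⊕ Fin 2) :
    branchLabels m k ⊆ Set.Iio (2 * m) := by
  intro a ha
  rcases k with j | i <;> simp only [branchLabels] at ha <;> [split_ifs at ha; skip] <;>
    simp only [Set.mem_insert_iff, Set.mem_singleton_iff, Set.mem_Iio] at ha ⊢ <;> omega

lemma branchLabels_disjoint {k l : Fin m ⊕ Fin 2} (hkl : k ≠ l) :
    Disjoint (branchLabels m k) (branchLabels m l) := by
  rw [Set.disjoint_left]
  intro a hk hl
  rcases k with j | i <;> rcases l with j' | i' <;>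
    simp only [branchLabels, ne_eq, inl.injEq, inr.injEq, reduceCtorEq, Fin.ext_iff]
      at hk hl hkl <;>
    (try split_ifs at hk hl) <;> simp only [Set.mem_insert_iff, Set.mem_singleton_iff] at hk hl <;>
    omega

lemma exists_cycleFar_branchLabels_inl (hm : 3 ≤ m) (k : Fin m ⊕ Fin 2) {j : Fin m}
    (hj : ¬(j.val = 0 ∨ j.val = 2)) :
    ∃ a ∈ branchLabels m k, ∃ b ∈ branchLabels m (inl j), CycleFar (2 * m) a b := by
  obtain ⟨a, ha⟩ := branchLabels_nonempty k
  simp only [branchLabels, if_neg hj]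
  rcases cycleFar_or_cycleFar_add hm a j with h | h
  exacts [⟨a, ha, j, by simp, h⟩, ⟨a, ha, j + m, by simp, h⟩]

lemma exists_cycleFar_branchLabels (hm : 4 ≤ m) {k l : Fin m ⊕ Fin 2} (hkl : k ≠ l) :
    ∃ a ∈ branchLabels m k, ∃ b ∈ branchLabels m l, CycleFar (2 * m) a b := by
  by_cases hl : ∃ j : Fin m, l = inl j ∧ ¬(j.val = 0 ∨ j.val = 2)
  · obtain ⟨j, rfl, hj⟩ := hl
    exact exists_cycleFar_branchLabels_inl (by omega) k hj
  by_cases hk : ∃ j : Fin m, k = inl j ∧ ¬(j.val = 0 ∨ j.val = 2)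
  · obtain ⟨j, rfl, hj⟩ := hk
    obtain ⟨a, ha, b, hb, h⟩ := exists_cycleFar_branchLabels_inl (by omega) l hj
    exact ⟨b, hb, a, ha, h.symm⟩
  push Not at hk hl
  -- both branch sets are among the singletons `{0}, {2}, {m}, {m + 2}`
  rcases k with j | i <;> rcases l with j' | i' <;>
    simp only [inl.injEq, forall_eq', reduceCtorEq, IsEmpty.forall_iff] at hk hl <;>
    simp only [branchLabels, ne_eq, inl.injEq, inr.injEq, reduceCtorEq, Fin.ext_iff,
      Set.mem_singleton_iff, exists_eq_left, CycleFar, ↓reduceIte, *] at hkl ⊢ <;> omega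

lemma connected_induce_image_branchLabels (hm : 3 ≤ m) (k : Fin m ⊕ Fin 2) :
    ((wheelGraph (2 * m + 1))ᶜ.induce (rimVertex (2 * m) '' branchLabels m k)).Connected := by
  rcases k with j | i <;> simp only [branchLabels]
  · by_cases hj : j.val = 0 ∨ j.val = 2
    · rw [if_pos hj, Set.image_singleton, induce_singleton_eq_top]
      exact connected_top
    · rw [if_neg hj, Set.image_pair]
      refine induce_pair_connected_of_adj
        ((compl_wheelGraph_adj_rimVertex (by omega) (by omega)).2 ?_)
      unfold CycleFar
      omega
  · rw [Set.image_singleton, induce_singleton_eq_top]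
    exact connected_top

end BranchSets

theorem isMinorOf_top_compl_wheelGraph {m : ℕ} (hm : 4 ≤ m) :
    IsMinorOf (⊤ : SimpleGraph (Fin m ⊕ Fin 2)) (wheelGraph (2 * m + 1))ᶜ := by
  have hlt := branchLabels_subset_Iio (m := m) (by omega)
  refine ⟨fun k => rimVertex (2 * m) '' branchLabels m k,
    connected_induce_image_branchLabels (by omega), fun k l hkl => ?_, fun k l hkl => ?_⟩
  · exact (branchLabels_disjoint hkl).image (rimVertex_injOn _) (hlt k) (hlt l)
  · obtain ⟨a, ha, b, hb, hab⟩ := exists_cycleFar_branchLabels hm hkl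
    exact ⟨_, Set.mem_image_of_mem _ ha, _, Set.mem_image_of_mem _ hb,
      (compl_wheelGraph_adj_rimVertex (hlt k ha) (hlt l hb)).2 hab⟩

/-- For `t ≥ 6`, the complement of the wheel graph `W (2t-3)` contains a `K t` minor. -/
theorem wheel_compl_Kt (t : ℕ) (ht : 6 ≤ t) :
    IsMinorOf (⊤ : SimpleGraph (Fin t)) (wheelGraph (2 * t - 3))ᶜ := by
  obtain ⟨m, rfl⟩ : ∃ m, t = m + 2 := ⟨t - 2, by omega⟩
  rw [show 2 * (m + 2) - 3 = 2 * m + 1 by omega]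
  exact (isMinorOf_top_compl_wheelGraph (by omega)).top_of_equiv finSumFinEquiv
end

section
/- For every integer n ≥ 6, the complement of the wheel graph W_n does not contain the complete graph on ⌊3(n−1)/4⌋ + 1 vertices as a minor. -/
open SimpleGraph

/-!
The hub is isolated in the complement of the wheel, so it lies in no branch set of a clique
minor on at least two vertices. The branch sets thus become `k` pairwise disjoint nonempty sets
of rim vertices in `ZMod m`, `m = n - 1`, any two of them containing a pair `i, j` with
`j ≠ i + 1`. If `s` of them are singletons, the set `S` of singleton points is disjoint from
`S + 1`, so `2 s ≤ m`; counting all rim vertices gives `s + 2 (k - s) ≤ m`. Adding,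
`4 k ≤ 3 m`, which fails for `k = ⌊3 m / 4⌋ + 1`.
-/

open Finset Function

lemma SimpleGraph.eq_of_induce_connected_of_isolated {β : Type*} {G : SimpleGraph β} {s : Set β}
    (hs : (G.induce s).Connected) {v w : β} (hv : v ∈ s) (hw : w ∈ s)
    (hiso : ∀ u, ¬ G.Adj v u) : v = w := by
  obtain ⟨p⟩ := hs.preconnected ⟨v, hv⟩ ⟨w, hw⟩
  cases p with
  | nil => rfl
  | cons h _ => exact absurd h (hiso _)

lemma isolated_notMem_branchSet {α β : Type*} {H : SimpleGraph α} {G : SimpleGraph β}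
    {f : α → Set β} (hconn : ∀ a, (G.induce (f a)).Connected)
    (hadj : ∀ a b, H.Adj a b → ∃ u ∈ f a, ∃ v ∈ f b, G.Adj u v) {a b : α} (hab : H.Adj a b)
    {v : β} (hiso : ∀ w, ¬ G.Adj v w) : v ∉ f a := by
  intro hv
  obtain ⟨u, hu, w, -, huw⟩ := hadj a b hab
  rw [← eq_of_induce_connected_of_isolated (hconn a) hv hu hiso] at huw
  exact hiso w huw

lemma wheelGraph_compl_not_adj_none (n : ℕ) (v : Option (ZMod (n - 1))) :
    ¬ (wheelGraph n)ᶜ.Adj none v :=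
  fun h => h.2 ⟨h.1, Or.inl rfl⟩

lemma wheelGraph_compl_adj_some {n : ℕ} {i j : ZMod (n - 1)} :
    (wheelGraph n)ᶜ.Adj (some i) (some j) ↔ i ≠ j ∧ i - j ≠ 1 ∧ j - i ≠ 1 := by
  simp only [compl_adj, wheelGraph, ne_eq, Option.some.injEq, reduceCtorEq, exists_and_left,
    exists_eq_left', false_or, not_and, not_or]
  tauto

lemma two_mul_card_le_of_forall_apply_notMem {α : Type*} [Fintype α] [DecidableEq α]
    {f : α → α} (hf : Injective f) {S : Finset α} (hS : ∀ x ∈ S, f x ∉ S) :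
    2 * #S ≤ Fintype.card α :=
  calc 2 * #S = #(S ∪ S.image f) := by
        rw [card_union_of_disjoint, card_image_of_injective _ hf, two_mul]
        exact disjoint_left.2 fun x hx hfx => by
          obtain ⟨y, hy, rfl⟩ := mem_image.1 hfx
          exact hS y hy hx
    _ ≤ Fintype.card α := card_le_univ _

lemma sum_card_le_card_of_pairwise_disjoint {ι α : Type*} [Fintype ι] [Fintype α]
    [DecidableEq α] {g : ι → Finset α} (hg : Pairwise (Disjoint on g)) :
    ∑ a, #(g a) ≤ Fintype.card α := by
  rw [← card_biUnion fun a _ b _ hab => hg hab]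
  exact card_le_univ _

lemma two_mul_card_le_sum_card_add_card_singletons {ι α : Type*} [Fintype ι]
    {g : ι → Finset α} (hg : ∀ a, (g a).Nonempty) :
    2 * Fintype.card ι ≤ ∑ a, #(g a) + #{a | #(g a) = 1} := by
  classical
  rw [card_filter, ← sum_add_distrib, Fintype.card_eq_sum_ones, mul_sum]
  refine sum_le_sum fun a _ => ?_
  have := (hg a).card_pos
  split_ifs <;> omega

lemma four_mul_card_le_three_mul_of_nonconsecutive {m : ℕ} [NeZero m] [Nontrivial (ZMod m)]
    {ι : Type*} [Fintype ι] {g : ι → Finset (ZMod m)} (hne : ∀ a, (g a).Nonempty)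
    (hdisj : Pairwise (Disjoint on g))
    (hfar : ∀ a b, a ≠ b → ∃ i ∈ g a, ∃ j ∈ g b, j ≠ i + 1) :
    4 * Fintype.card ι ≤ 3 * m := by
  classical
  have h3 := two_mul_card_le_sum_card_add_card_singletons hne
  set A := ({a | #(g a) = 1} : Finset ι)
  have hA : #(A.biUnion g) = #A := by
    rw [card_biUnion fun a _ b _ hab => hdisj hab]
    exact (sum_congr rfl fun a ha => (mem_filter.1 ha).2).trans (card_eq_sum_ones A).symm
  have hsucc : ∀ i ∈ A.biUnion g, i + 1 ∉ A.biUnion g := by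
    simp only [mem_biUnion]
    rintro i ⟨a, ha, hi⟩ ⟨b, hb, hi'⟩
    obtain ⟨x, hx⟩ := card_eq_one.1 (mem_filter.1 ha).2
    obtain ⟨y, hy⟩ := card_eq_one.1 (mem_filter.1 hb).2
    rw [hx, mem_singleton] at hi
    rw [hy, mem_singleton] at hi'
    subst hi hi'
    by_cases hab : a = b
    · subst hab
      rw [hx, singleton_inj, left_eq_add] at hy
      exact one_ne_zero hy
    · obtain ⟨i, hi, j, hj, hij⟩ := hfar a b hab
      rw [hx, mem_singleton] at hi
      rw [hy, mem_singleton] at hj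
      exact hij (by rw [hi, hj])
  have h1 := two_mul_card_le_of_forall_apply_notMem (add_left_injective 1) hsucc
  have h2 := sum_card_le_card_of_pairwise_disjoint hdisj
  rw [ZMod.card] at h1 h2
  omega

/-- For `n ≥ 6`, the complement of the wheel graph `W n` has no `K (⌊3(n-1)/4⌋ + 1)` minor. -/
theorem wheel_compl_no_large_clique_minor (n : ℕ) (hn : 6 ≤ n) :
    ¬ IsMinorOf (⊤ : SimpleGraph (Fin (3 * (n - 1) / 4 + 1))) (wheelGraph n)ᶜ := by
  classical
  have : NeZero (n - 1) := ⟨by omega⟩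
  have : Fact (1 < n - 1) := ⟨by omega⟩
  have : Nontrivial (Fin (3 * (n - 1) / 4 + 1)) := Fin.nontrivial_iff_two_le.2 (by omega)
  rintro ⟨f, hconn, hdisj, hadj⟩
  have hub (a) : none ∉ f a :=
    isolated_notMem_branchSet hconn hadj (exists_ne a).choose_spec.symm
      (wheelGraph_compl_not_adj_none n)
  have hrim (a) {u} (hu : u ∈ f a) : ∃ i, u = some i :=
    Option.ne_none_iff_exists'.1 (ne_of_mem_of_not_mem hu (hub a))
  let g a : Finset (ZMod (n - 1)) := {i | some i ∈ f a}
  have hne (a) : (g a).Nonempty := by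
    obtain ⟨u, hu, -⟩ := hadj a _ (exists_ne a).choose_spec.symm
    obtain ⟨i, rfl⟩ := hrim a hu
    exact ⟨i, by simpa [g] using hu⟩
  have hfar (a b) (hab : a ≠ b) : ∃ i ∈ g a, ∃ j ∈ g b, j ≠ i + 1 := by
    obtain ⟨u, hu, v, hv, huv⟩ := hadj a b hab
    obtain ⟨i, rfl⟩ := hrim a hu
    obtain ⟨j, rfl⟩ := hrim b hv
    refine ⟨i, by simpa [g] using hu, j, by simpa [g] using hv, fun h => ?_⟩
    exact (wheelGraph_compl_adj_some.1 huv).2.2 (by rw [h, add_sub_cancel_left])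
  have := four_mul_card_le_three_mul_of_nonconsecutive hne
    (fun a b hab => disjoint_filter.2 fun i _ ha hb => (hdisj a b hab).ne_of_mem ha hb rfl) hfar
  simp only [Fintype.card_fin] at this
  omega
end

section
/- For every integer n ≥ 7, if G is an elongated triangular prism graph on 2n−3 vertices, then the complement of G contains K_n as a minor. -/
open SimpleGraph

/-- Model of an elongated triangular prism: for `m : Fin 3 → ℕ`, the graph with
the two triangles `(i, 0)`, `i : Fin 3` and `(i, m i + 1)`, `i : Fin 3`, joined by
three internally disjoint paths `(i, 0), (i, 1), …, (i, m i + 1)` (so `m i` counts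
the subdivision vertices of the `i`-th connecting edge of the prism). -/
def prismGraph (m : Fin 3 → ℕ) : SimpleGraph (Σ i : Fin 3, Fin (m i + 2)) where
  Adj x y :=
    (x.1 = y.1 ∧ ((x.2 : ℕ) + 1 = (y.2 : ℕ) ∨ (y.2 : ℕ) + 1 = (x.2 : ℕ))) ∨
    (x.1 ≠ y.1 ∧ (((x.2 : ℕ) = 0 ∧ (y.2 : ℕ) = 0) ∨
      ((x.2 : ℕ) = m x.1 + 1 ∧ (y.2 : ℕ) = m y.1 + 1)))
  symm := by
    constructor
    rintro x y (⟨h1, h2⟩ | ⟨h1, h2⟩)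
    · exact Or.inl ⟨h1.symm, h2.symm⟩
    · rcases h2 with ⟨a, b⟩ | ⟨a, b⟩
      · exact Or.inr ⟨h1.symm, Or.inl ⟨b, a⟩⟩
      · exact Or.inr ⟨h1.symm, Or.inr ⟨b, a⟩⟩
  loopless := by
    constructor
    rintro x (⟨h1, h2⟩ | ⟨h1, h2⟩)
    · omega
    · exact h1 rfl

/-- A graph is an elongated triangular prism if it is isomorphic to `prismGraph m`
for some subdivision counts `m`. -/
def IsElongatedTriangularPrism {V : Type*} (G : SimpleGraph V) : Prop :=
  ∃ m : Fin 3 → ℕ, Nonempty (G ≃g prismGraph m)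

/-!
Unfold the prism along the Hamiltonian path that runs down one connecting path, up the second
and down the third: it becomes the path `0, 1, …, 2n - 4` plus four chords at `0` and `2n - 4`
closing the two triangles. Take as branch sets the pairs `{j, j + n - 2}` for `1 ≤ j ≤ n - 3`
and the singletons `{0}`, `{n - 2}`, `{2n - 4}`. The two vertices of a pair are far apart on the
path and not joined by a chord, so each branch set is connected in the complement, and two branch
sets fail to be adjacent in the complement only if the prism contains every edge between them.
The chords never achieve this once the paths are ordered so that the first and the last have at
most `n - 5` and `n - 6` subdivision vertices (if the first has exactly `n - 5`, two pairs
exchange partners).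
-/

open Function

theorem IsMinorOf.map {α β γ : Type*} {H : SimpleGraph α} {G : SimpleGraph β}
    {G' : SimpleGraph γ} (φ : G →g G') (hφ : Injective φ) (h : IsMinorOf H G) :
    IsMinorOf H G' := by
  obtain ⟨f, hconn, hdisj, hadj⟩ := h
  refine ⟨fun a => φ '' f a, fun a => ?_, fun a b hab => ?_, fun a b hab => ?_⟩
  · exact (hconn a).map (induceHom φ (Set.mapsTo_image φ (f a)))
      (Set.surjective_mapsTo_image_restrict φ (f a))
  · exact (Set.disjoint_image_iff hφ).mpr (hdisj a b hab)
  · obtain ⟨u, hu, v, hv, huv⟩ := hadj a b hab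
    exact ⟨φ u, Set.mem_image_of_mem φ hu, φ v, Set.mem_image_of_mem φ hv, φ.map_adj huv⟩

theorem IsMinorOf.of_pairs {α β : Type*} {H : SimpleGraph α} {G : SimpleGraph β}
    (u v : α → β) (hconn : ∀ a, u a = v a ∨ G.Adj (u a) (v a))
    (hdisj : ∀ a b, a ≠ b → u a ≠ u b ∧ u a ≠ v b ∧ v a ≠ u b ∧ v a ≠ v b)
    (hadj : ∀ a b, H.Adj a b →
      ∃ x, (x = u a ∨ x = v a) ∧ ∃ y, (y = u b ∨ y = v b) ∧ G.Adj x y) :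
    IsMinorOf H G := by
  refine ⟨fun a => {u a, v a}, fun a => ?_, fun a b hab => ?_, fun a b hab => ?_⟩
  · rcases hconn a with h | h
    · dsimp only
      rw [h, Set.pair_eq_singleton]
      exact Connected.of_subsingleton
    · exact induce_pair_connected_of_adj h
  · obtain ⟨h1, h2, h3, h4⟩ := hdisj a b hab
    simp only [Set.disjoint_insert_right, Set.disjoint_singleton_right, Set.mem_insert_iff,
      Set.mem_singleton_iff]
    grind
  · obtain ⟨x, hx, y, hy, hxy⟩ := hadj a b hab
    exact ⟨x, by simpa using hx, y, by simpa using hy, hxy⟩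

/-- Edges of the unfolded prism, listed from their smaller end. -/
def UnfoldedPrismRel (a b c x y : ℕ) : Prop :=
  y = x + 1 ∨ (x = 0 ∧ (y = a + b + 3 ∨ y = a + b + 4)) ∨
    (y = a + b + c + 5 ∧ (x = a + 1 ∨ x = a + 2))

def unfoldedPrism (a b c : ℕ) : SimpleGraph (Fin (a + b + c + 6)) :=
  fromRel fun x y => UnfoldedPrismRel a b c x y

theorem unfoldedPrism_compl_adj {a b c : ℕ} {x y : Fin (a + b + c + 6)} :
    (unfoldedPrism a b c)ᶜ.Adj x y ↔
      (x : ℕ) ≠ y ∧ ¬UnfoldedPrismRel a b c x y ∧ ¬UnfoldedPrismRel a b c y x := by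
  simp only [compl_adj, unfoldedPrism, fromRel_adj, ne_eq, ← Fin.val_ne_iff]
  tauto

section Unfolding

variable (m : Fin 3 → ℕ) (i₀ i₁ i₂ : Fin 3)

/-- The Hamiltonian path of `prismGraph m` that runs down path `i₀`, up path `i₁` and down
path `i₂`. -/
def prismUnfold (t : Fin (m i₀ + m i₁ + m i₂ + 6)) : Σ i : Fin 3, Fin (m i + 2) :=
  if (t : ℕ) ≤ m i₀ + 1 then ⟨i₀, ⟨m i₀ + 1 - t, by omega⟩⟩
  else if h : (t : ℕ) ≤ m i₀ + m i₁ + 3 then ⟨i₁, ⟨t - (m i₀ + 2), by omega⟩⟩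
  else ⟨i₂, ⟨m i₀ + m i₁ + m i₂ + 5 - t, by omega⟩⟩

variable {m i₀ i₁ i₂}

theorem prismUnfold_injective (h01 : i₀ ≠ i₁) (h02 : i₀ ≠ i₂) (h12 : i₁ ≠ i₂) :
    Injective (prismUnfold m i₀ i₁ i₂) := by
  intro x y h
  unfold prismUnfold at h
  split_ifs at h <;> simp only [Sigma.mk.inj_iff, Fin.heq_ext_iff, Fin.ext_iff] at h <;> grind

theorem prismUnfold_adj_iff (h01 : i₀ ≠ i₁) (h02 : i₀ ≠ i₂) (h12 : i₁ ≠ i₂)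
    (x y : Fin (m i₀ + m i₁ + m i₂ + 6)) :
    (prismGraph m).Adj (prismUnfold m i₀ i₁ i₂ x) (prismUnfold m i₀ i₁ i₂ y) ↔
      (unfoldedPrism (m i₀) (m i₁) (m i₂)).Adj x y := by
  simp only [unfoldedPrism, fromRel_adj, UnfoldedPrismRel, Fin.val_ne_iff.symm, prismUnfold]
  split_ifs <;> simp only [prismGraph, ne_eq, h01, h02, h12, h01.symm, h02.symm, h12.symm,
    not_false_iff, not_true, true_and, false_and, false_or, or_false] <;> omega

def prismUnfoldEmbedding (h01 : i₀ ≠ i₁) (h02 : i₀ ≠ i₂) (h12 : i₁ ≠ i₂) :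
    unfoldedPrism (m i₀) (m i₁) (m i₂) ↪g prismGraph m where
  toFun := prismUnfold m i₀ i₁ i₂
  inj' := prismUnfold_injective h01 h02 h12
  map_rel_iff' := prismUnfold_adj_iff h01 h02 h12 _ _

end Unfolding

section Branches

/-- The branch sets of the `K n` model are `{branchLo n j, branchHi n a j}` for `j < n`:
pairs `{j, j + n - 2}` for `1 ≤ j ≤ n - 3` and singletons `{0}`, `{n - 2}`, `{2n - 4}`. -/
def branchLo (n j : ℕ) : ℕ := if j = n - 1 then 2 * n - 4 else j

/-- When `a + 5 = n`, the pair `{n - 3, 2n - 5}` would be completely joined to `2n - 4` by a chord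
and a path edge, so the partners of `2` and `n - 3` are exchanged. -/
def branchHi (n a j : ℕ) : ℕ :=
  if j = 0 then 0
  else if j = n - 2 then n - 2
  else if j = n - 1 then 2 * n - 4
  else if a + 5 = n ∧ j = 2 then 2 * n - 5
  else if a + 5 = n ∧ j = n - 3 then n
  else j + n - 2

variable {n a b c : ℕ}

theorem branch_cases (hn : 7 ≤ n) {j : ℕ} (hj : j < n) :
    (j = 0 ∧ branchLo n j = 0 ∧ branchHi n a j = 0) ∨
    (j + 2 = n ∧ branchLo n j = j ∧ branchHi n a j = j) ∨
    (j + 1 = n ∧ branchLo n j + 4 = 2 * n ∧ branchHi n a j + 4 = 2 * n) ∨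
    (1 ≤ j ∧ j + 3 ≤ n ∧ ¬(a + 5 = n ∧ (j = 2 ∨ j + 3 = n)) ∧
      branchLo n j = j ∧ branchHi n a j + 2 = j + n) ∨
    (a + 5 = n ∧ j = 2 ∧ branchLo n j = j ∧ branchHi n a j + 5 = 2 * n) ∨
    (a + 5 = n ∧ j + 3 = n ∧ branchLo n j = j ∧ branchHi n a j = n) := by
  unfold branchLo branchHi
  split_ifs <;>
    first
    | exact .inl (by omega)
    | exact .inr (.inl (by omega))
    | exact .inr (.inr (.inl (by omega)))
    | exact .inr (.inr (.inr (.inl (by omega))))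
    | exact .inr (.inr (.inr (.inr (.inl (by omega)))))
    | exact .inr (.inr (.inr (.inr (.inr (by omega)))))

theorem branch_lt (hn : 7 ≤ n) {j : ℕ} (hj : j < n) :
    branchLo n j + 3 < 2 * n ∧ branchHi n a j + 3 < 2 * n := by
  rcases branch_cases (a := a) hn hj with h | h | h | h | h | h <;> omega

theorem branch_ne (hn : 7 ≤ n) {j k : ℕ} (hj : j < n) (hk : k < n) (hjk : j ≠ k) :
    branchLo n j ≠ branchLo n k ∧ branchLo n j ≠ branchHi n a k ∧
      branchHi n a j ≠ branchLo n k ∧ branchHi n a j ≠ branchHi n a k := by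
  rcases branch_cases (a := a) hn hj with h | h | h | h | h | h <;>
    rcases branch_cases (a := a) hn hk with g | g | g | g | g | g <;> omega

theorem branch_nonadj (hn : 7 ≤ n) (hsum : a + b + c + 9 = 2 * n) {j : ℕ} (hj : j < n) :
    branchLo n j = branchHi n a j ∨
      branchLo n j ≠ branchHi n a j ∧ ¬UnfoldedPrismRel a b c (branchLo n j) (branchHi n a j) ∧
        ¬UnfoldedPrismRel a b c (branchHi n a j) (branchLo n j) := by
  unfold UnfoldedPrismRel
  rcases branch_cases (a := a) hn hj with h | h | h | h | h | h <;> omega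

theorem exists_nonadj_between_branches (hn : 7 ≤ n) (hsum : a + b + c + 9 = 2 * n)
    (ha : a + 5 ≤ n) (hc : c + 6 ≤ n) {j k : ℕ} (hj : j < n) (hk : k < n) (hjk : j ≠ k) :
    ∃ x, (x = branchLo n j ∨ x = branchHi n a j) ∧ ∃ y, (y = branchLo n k ∨ y = branchHi n a k) ∧
      x ≠ y ∧ ¬UnfoldedPrismRel a b c x y ∧ ¬UnfoldedPrismRel a b c y x := by
  by_contra! hall
  have h1 := hall _ (Or.inl rfl) _ (Or.inl rfl)
  have h2 := hall _ (Or.inl rfl) _ (Or.inr rfl)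
  have h3 := hall _ (Or.inr rfl) _ (Or.inl rfl)
  have h4 := hall _ (Or.inr rfl) _ (Or.inr rfl)
  unfold UnfoldedPrismRel at h1 h2 h3 h4
  rcases branch_cases (a := a) hn hj with h | h | h | h | h | h <;>
    rcases branch_cases (a := a) hn hk with g | g | g | g | g | g <;> omega

end Branches

theorem top_isMinorOf_compl_unfoldedPrism {n a b c : ℕ} (hn : 7 ≤ n)
    (hsum : a + b + c + 9 = 2 * n) (ha : a + 5 ≤ n) (hc : c + 6 ≤ n) :
    IsMinorOf (⊤ : SimpleGraph (Fin n)) (unfoldedPrism a b c)ᶜ := by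
  have hlt (j : Fin n) := branch_lt (a := a) hn j.isLt
  refine IsMinorOf.of_pairs (fun j => ⟨branchLo n j, by have := hlt j; omega⟩)
    (fun j => ⟨branchHi n a j, by have := hlt j; omega⟩) (fun j => ?_) (fun j k hjk => ?_)
    (fun j k hjk => ?_)
  · simpa only [Fin.mk.injEq, unfoldedPrism_compl_adj] using branch_nonadj (b := b) hn hsum j.isLt
  · simpa [Fin.ext_iff] using branch_ne (a := a) hn j.isLt k.isLt (Fin.val_ne_of_ne hjk)
  · obtain ⟨x, hx, y, hy, hxy⟩ := exists_nonadj_between_branches hn hsum ha hc j.isLt k.isLt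
      (Fin.val_ne_of_ne hjk.ne)
    have := hlt j
    have := hlt k
    refine ⟨⟨x, by omega⟩, ?_, ⟨y, by omega⟩, ?_, unfoldedPrism_compl_adj.mpr hxy⟩ <;>
      simpa only [Fin.mk.injEq]

theorem exists_prism_ordering {n : ℕ} (hn : 7 ≤ n) (m : Fin 3 → ℕ)
    (hsum : m 0 + m 1 + m 2 + 9 = 2 * n) :
    ∃ i₀ i₁ i₂ : Fin 3, i₀ ≠ i₁ ∧ i₀ ≠ i₂ ∧ i₁ ≠ i₂ ∧
      m i₀ + m i₁ + m i₂ + 9 = 2 * n ∧ m i₀ + 5 ≤ n ∧ m i₂ + 6 ≤ n := by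
  by_contra! h
  have := h 0 1 2 (by decide) (by decide) (by decide)
  have := h 0 2 1 (by decide) (by decide) (by decide)
  have := h 1 0 2 (by decide) (by decide) (by decide)
  have := h 1 2 0 (by decide) (by decide) (by decide)
  have := h 2 0 1 (by decide) (by decide) (by decide)
  have := h 2 1 0 (by decide) (by decide) (by decide)
  omega

theorem card_prismGraph_vertices (m : Fin 3 → ℕ) :
    Fintype.card (Σ i : Fin 3, Fin (m i + 2)) = m 0 + m 1 + m 2 + 6 := by
  simp only [Fintype.card_sigma, Fintype.card_fin, Fin.sum_univ_three]
  ring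

/-- For `n ≥ 7`, the complement of an elongated triangular prism of order `2n - 3`
has a `K n` minor. -/
theorem prism_compl_Kn (n : ℕ) (hn : 7 ≤ n) {V : Type*} [Fintype V]
    (G : SimpleGraph V) (hG : IsElongatedTriangularPrism G)
    (hcard : Fintype.card V = 2 * n - 3) :
    IsMinorOf (⊤ : SimpleGraph (Fin n)) Gᶜ := by
  obtain ⟨m, ⟨e⟩⟩ := hG
  have hsum : m 0 + m 1 + m 2 + 9 = 2 * n := by
    have := (Fintype.card_congr e.toEquiv).symm.trans hcard
    rw [card_prismGraph_vertices] at this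
    omega
  obtain ⟨i₀, i₁, i₂, h01, h02, h12, hsum', ha, hc⟩ := exists_prism_ordering hn m hsum
  let φ := Embedding.complEquiv (e.symm.toEmbedding.comp (prismUnfoldEmbedding h01 h02 h12))
  exact (top_isMinorOf_compl_unfoldedPrism hn hsum' ha hc).map φ.toHom φ.injective
end

section
/- Let G be a maximal outerplanar graph on n ≥ 7 vertices with outer cycle v_1,…,v_n. Then exactly one of the following holds: (1) G has two vertex-disjoint chords e_1, e_2 each of which is a 2-chord (i.e., joins two vertices at distance 2 along the outer cycle); or (2) G is isomorphic to the join K_1 + P_{n−1} of a vertex with a path on n−1 vertices (a fan graph). -/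
open SimpleGraph

/-- A maximal outerplanar graph on `Fin n`, with vertices in cyclic order:
it contains the outer cycle `i ~ i+1 (mod n)`, its chords are pairwise
non-crossing, and it is edge-maximal with that property (equivalently, it is a
triangulation of the `n`-gon).  An existing edge `{e,f}` crosses the pair
`{a,b}` (with `a < b`) iff exactly one of its endpoints lies strictly between
`a` and `b`. -/
def IsMaxOuterplanar {n : ℕ} (G : SimpleGraph (Fin n)) : Prop :=
  (∀ i j : Fin n, (j : ℕ) = ((i : ℕ) + 1) % n → G.Adj i j) ∧
  (∀ a b e f : Fin n, G.Adj a b → G.Adj e f →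
    ¬(a < e ∧ e < b ∧ (f < a ∨ b < f))) ∧
  (∀ a b : Fin n, a < b → ¬G.Adj a b →
    ∃ e f : Fin n, G.Adj e f ∧ a < e ∧ e < b ∧ (f < a ∨ b < f))

/-- The join `G + H` of two graphs. -/
def joinGraph {α β : Type*} (G : SimpleGraph α) (H : SimpleGraph β) :
    SimpleGraph (α ⊕ β) where
  Adj x y := match x, y with
    | Sum.inl a, Sum.inl b => G.Adj a b
    | Sum.inr a, Sum.inr b => H.Adj a b
    | _, _ => True
  symm := by
    refine ⟨?_⟩
    rintro (a | a) (b | b) h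
    · exact G.adj_symm h
    · trivial
    · trivial
    · exact H.adj_symm h
  loopless := by
    refine ⟨?_⟩
    rintro (a | a) h
    · exact G.loopless.irrefl a h
    · exact H.loopless.irrefl a h

/-! Every chord `ab` cuts off an ear, i.e. a 2-chord inside the arc from `a` to `b`: induct on the
length of the arc, using the triangle on `ab`. An ear `xy` on the long side of an outer edge and an
ear on the far side of `xy` are two 2-chords; if no two 2-chords are disjoint, they share a vertex
`k` lying on 2-chords `yk` and `kz`. Such a `k` is universal: an edge crossing a non-edge `kj` would
cut off an ear avoiding `k`, which would have to meet both `yk` and `kz`, hence contain `y` and `z`;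
this is impossible for `n ≥ 7`. A triangulated polygon with a universal vertex is a fan, and every
2-chord of a fan passes through its apex. -/

namespace Fin

variable {n : ℕ}

theorem val_sub_eq_iff {a b : Fin n} {t : ℕ} (ht : t < n) :
    (b - a).val = t ↔ b.val = (a.val + t) % n := by
  have hmod : (a.val + t) % n = if a.val + t < n then a.val + t else a.val + t - n := by
    split_ifs with h
    · exact Nat.mod_eq_of_lt h
    · rw [Nat.mod_eq_sub_mod (by omega), Nat.mod_eq_of_lt (by omega)]
  rw [hmod]
  rcases le_or_gt a b with hab | hab
  · rw [sub_val_of_le hab]; rw [le_def] at hab; split_ifs <;> omega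
  · rw [coe_sub_iff_lt.2 hab]; rw [lt_def] at hab; split_ifs <;> omega

/-- `(x - a).val` is the position of `x` counted forward from `a` around the cycle, so
`InArc a b x` says that `x` lies strictly inside the arc from `a` to `b`. -/
def InArc (a b x : Fin n) : Prop := 0 < (x - a).val ∧ (x - a).val < (b - a).val

variable [NeZero n]

theorem val_sub_add_val_sub (k a b : Fin n) :
    (a - b).val + (b - k).val = (a - k).val ∨ (a - b).val + (b - k).val = (a - k).val + n := by
  rw [← sub_sub_sub_cancel_right a b k]
  rcases le_or_gt (b - k) (a - k) with h | h
  · rw [sub_val_of_le h]; rw [le_def] at h; omega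
  · rw [coe_sub_iff_lt.2 h]; rw [lt_def] at h; omega

theorem val_sub_add_val_sub_of_ne {a b : Fin n} (h : a ≠ b) : (a - b).val + (b - a).val = n := by
  have hab : (a - b).val ≠ 0 := by simpa [sub_eq_zero] using h
  have := val_sub_add_val_sub a a b
  simp only [sub_self, val_zero] at this
  omega

theorem eq_iff_val_sub_eq (k : Fin n) {a b : Fin n} : a = b ↔ (a - k).val = (b - k).val := by
  rw [Fin.val_inj, sub_left_inj]

theorem exists_val_sub_eq (k : Fin n) {t : ℕ} (ht : t < n) : ∃ x : Fin n, (x - k).val = t :=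
  ⟨k + ⟨t, ht⟩, by simp⟩

variable {a b x : Fin n}

theorem inArc_iff_of_lt (h : a < b) : InArc a b x ↔ a < x ∧ x < b := by
  have hx := val_sub_add_val_sub 0 x a
  have hb := val_sub_add_val_sub 0 b a
  simp only [sub_zero] at hx hb
  simp only [InArc, lt_def] at h ⊢
  omega

theorem inArc_iff_of_gt (h : a < b) : InArc b a x ↔ x < a ∨ b < x := by
  have hx := val_sub_add_val_sub 0 x b
  have ha := val_sub_add_val_sub 0 a b
  simp only [sub_zero] at hx ha
  simp only [InArc, lt_def] at h ⊢
  omega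

end Fin

section TwoChords

variable {n : ℕ} {G : SimpleGraph (Fin n)}

def HasDisjointTwoChords (G : SimpleGraph (Fin n)) : Prop :=
  ∃ a b c d : Fin n, (b - a).val = 2 ∧ (d - c).val = 2 ∧ G.Adj a b ∧ G.Adj c d ∧
    a ≠ c ∧ a ≠ d ∧ b ≠ c ∧ b ≠ d

theorem hasDisjointTwoChords_iff (hn : 2 < n) :
    HasDisjointTwoChords G ↔
      ∃ a b c d : Fin n, (b : ℕ) = ((a : ℕ) + 2) % n ∧ (d : ℕ) = ((c : ℕ) + 2) % n ∧
        G.Adj a b ∧ G.Adj c d ∧ a ≠ c ∧ a ≠ d ∧ b ≠ c ∧ b ≠ d := by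
  simp only [HasDisjointTwoChords, Fin.val_sub_eq_iff hn]

theorem not_hasDisjointTwoChords_iff :
    ¬HasDisjointTwoChords G ↔ ∀ a b c d : Fin n, (b - a).val = 2 → (d - c).val = 2 →
      G.Adj a b → G.Adj c d → a = c ∨ a = d ∨ b = c ∨ b = d := by
  simp only [HasDisjointTwoChords, ne_eq, not_exists, not_and, ← not_or, not_not]

end TwoChords

namespace IsMaxOuterplanar

variable {n : ℕ} {G : SimpleGraph (Fin n)}

theorem adj_of_val_sub_eq_one (hG : IsMaxOuterplanar G) {a b : Fin n} (h : (b - a).val = 1) :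
    G.Adj a b :=
  hG.1 a b ((Fin.val_sub_eq_iff (by omega)).1 h)

variable [NeZero n]

theorem not_crossing (hG : IsMaxOuterplanar G) {a b e f : Fin n} (hab : G.Adj a b)
    (hef : G.Adj e f) (he : Fin.InArc a b e) (hf : Fin.InArc b a f) : False := by
  rcases lt_or_gt_of_ne hab.ne with h | h
  · rw [Fin.inArc_iff_of_lt h] at he
    rw [Fin.inArc_iff_of_gt h] at hf
    exact hG.2.1 a b e f hab hef ⟨he.1, he.2, hf⟩
  · rw [Fin.inArc_iff_of_gt h] at he
    rw [Fin.inArc_iff_of_lt h] at hf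
    exact hG.2.1 b a f e hab.symm hef.symm ⟨hf.1, hf.2, he⟩

theorem exists_crossing_of_not_adj (hG : IsMaxOuterplanar G) {a b : Fin n} (hne : a ≠ b)
    (hab : ¬G.Adj a b) : ∃ e f, G.Adj e f ∧ Fin.InArc a b e ∧ Fin.InArc b a f := by
  rcases lt_or_gt_of_ne hne with h | h
  · obtain ⟨e, f, hef, hae, heb, hf⟩ := hG.2.2 a b h hab
    exact ⟨e, f, hef, (Fin.inArc_iff_of_lt h).2 ⟨hae, heb⟩, (Fin.inArc_iff_of_gt h).2 hf⟩
  · obtain ⟨e, f, hef, hbe, hea, hf⟩ := hG.2.2 b a h (fun h' => hab h'.symm)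
    exact ⟨f, e, hef.symm, (Fin.inArc_iff_of_gt h).2 hf, (Fin.inArc_iff_of_lt h).2 ⟨hbe, hea⟩⟩

theorem exists_triangle (hG : IsMaxOuterplanar G) {a b : Fin n} (hab : G.Adj a b)
    (h2 : 2 ≤ (b - a).val) : ∃ m, Fin.InArc a b m ∧ G.Adj a m ∧ G.Adj m b := by
  classical
  -- take `m` to be the neighbour of `a` farthest along the arc: an edge crossing `mb` would
  -- cross `ab` or `am`, or end in `a` and be a farther neighbour
  obtain ⟨s, hs⟩ := Fin.exists_val_sub_eq a (t := 1) (by omega)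
  obtain ⟨m, hmS, hmax⟩ := Finset.exists_max_image ({x | Fin.InArc a b x ∧ G.Adj a x} : Finset _)
    (fun x => (x - a).val)
    ⟨s, (Finset.mem_filter_univ s).2 ⟨⟨by omega, by omega⟩, hG.adj_of_val_sub_eq_one hs⟩⟩
  obtain ⟨⟨hm0, hmb⟩, ham⟩ := (Finset.mem_filter_univ m).1 hmS
  refine ⟨m, ⟨hm0, hmb⟩, ham, ?_⟩
  by_contra hnot
  have hne : m ≠ b := by rintro rfl; omega
  obtain ⟨e, f, hef, ⟨he0, heb⟩, ⟨hf0, hfm⟩⟩ := hG.exists_crossing_of_not_adj hne hnot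
  have := Fin.val_sub_add_val_sub a e m
  have := Fin.val_sub_add_val_sub a b m
  have := Fin.val_sub_add_val_sub a f b
  have := Fin.val_sub_add_val_sub a m b
  have := Fin.val_sub_add_val_sub_of_ne hab.ne
  have := Fin.val_sub_add_val_sub_of_ne ham.ne
  rcases Nat.eq_zero_or_pos (f - a).val with hfa | hfa
  · obtain rfl : f = a := by simpa [sub_eq_zero] using hfa
    have := hmax e ((Finset.mem_filter_univ e).2 ⟨⟨by omega, by omega⟩, hef.symm⟩)
    omega
  rcases lt_or_gt_of_ne (show (f - a).val ≠ (b - a).val by omega) with hf | hf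
  · exact hG.not_crossing ham hef.symm ⟨by omega, by omega⟩ ⟨by omega, by omega⟩
  · exact hG.not_crossing hab hef ⟨by omega, by omega⟩ ⟨by omega, by omega⟩

theorem exists_twoChord_between (hG : IsMaxOuterplanar G) {a b : Fin n} (hab : G.Adj a b)
    (h2 : 2 ≤ (b - a).val) :
    ∃ c d, G.Adj c d ∧ (d - c).val = 2 ∧ (c - a).val + 2 = (d - a).val ∧
      (d - a).val ≤ (b - a).val := by
  induction hL : (b - a).val using Nat.strong_induction_on generalizing a b with
  | _ L ih =>
    rcases h2.eq_or_lt with h | h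
    · exact ⟨a, b, hab, by omega, by simp [← h], hL.le⟩
    obtain ⟨m, ⟨hm0, hmb⟩, ham, hmb'⟩ := hG.exists_triangle hab (by omega)
    by_cases hm : 2 ≤ (m - a).val
    · obtain ⟨c, d, hcd, hcd2, hc, hd⟩ := ih _ (by omega) ham hm rfl
      exact ⟨c, d, hcd, hcd2, hc, by omega⟩
    · have := Fin.val_sub_add_val_sub a b m
      obtain ⟨c, d, hcd, hcd2, hc, hd⟩ := ih (b - m).val (by omega) hmb' (by omega) rfl
      have := Fin.val_sub_add_val_sub a c m
      have := Fin.val_sub_add_val_sub a d m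
      exact ⟨c, d, hcd, hcd2, by omega, by omega⟩

theorem isUniversal_of_twoChords (hn : 7 ≤ n) (hG : IsMaxOuterplanar G)
    (hdisj : ¬HasDisjointTwoChords G) {y k z : Fin n} (hyk : G.Adj y k) (hy : (k - y).val = 2)
    (hkz : G.Adj k z) (hz : (z - k).val = 2) : G.IsUniversal k := by
  intro j hkj
  by_contra hnot
  obtain ⟨e, f, hef, ⟨he0, hej⟩, ⟨hf0, hfk⟩⟩ := hG.exists_crossing_of_not_adj hkj hnot
  have := Fin.val_sub_add_val_sub k f j
  have := Fin.val_sub_add_val_sub k f e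
  have := Fin.val_sub_add_val_sub_of_ne hkj
  obtain ⟨c, d, hcd, hcd2, hc, hd⟩ := hG.exists_twoChord_between hef (by omega)
  have := Fin.val_sub_add_val_sub k c e
  have := Fin.val_sub_add_val_sub k d e
  have := Fin.val_sub_add_val_sub_of_ne (show k ≠ y by rintro rfl; simp at hy)
  have hmeet_y := not_hasDisjointTwoChords_iff.1 hdisj _ _ _ _ hy hcd2 hyk hcd
  have hmeet_z := not_hasDisjointTwoChords_iff.1 hdisj _ _ _ _ hz hcd2 hkz hcd
  -- counted from `k`, `y` and `z` sit at `n - 2` and `2`, while `c` and `d` avoid `0`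
  simp only [Fin.eq_iff_val_sub_eq k, sub_self, Fin.val_zero] at hmeet_y hmeet_z
  omega

theorem exists_isUniversal (hn : 7 ≤ n) (hG : IsMaxOuterplanar G)
    (hdisj : ¬HasDisjointTwoChords G) : ∃ k, G.IsUniversal k := by
  obtain ⟨a, ha⟩ := Fin.exists_val_sub_eq (0 : Fin n) (t := 1) (by omega)
  have := Fin.val_sub_add_val_sub_of_ne (show (0 : Fin n) ≠ a by rintro rfl; simp at ha)
  obtain ⟨x, y, hxy, hxy2, -, -⟩ :=
    hG.exists_twoChord_between (hG.adj_of_val_sub_eq_one ha).symm (by omega)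
  have := Fin.val_sub_add_val_sub_of_ne (show x ≠ y by rintro rfl; simp at hxy2)
  obtain ⟨c, d, hcd, hcd2, hc, hd⟩ := hG.exists_twoChord_between hxy.symm (by omega)
  rcases not_hasDisjointTwoChords_iff.1 hdisj _ _ _ _ hxy2 hcd2 hxy hcd with rfl | rfl | rfl | rfl
  · omega
  · exact ⟨x, hG.isUniversal_of_twoChords hn hdisj hcd hcd2 hxy hxy2⟩
  · exact ⟨y, hG.isUniversal_of_twoChords hn hdisj hxy hxy2 hcd hcd2⟩
  · simp at hc

end IsMaxOuterplanar

namespace SimpleGraph.IsUniversal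

variable {n : ℕ} [NeZero n] {G : SimpleGraph (Fin n)} {k : Fin n}

theorem adj_iff (hk : G.IsUniversal k) (hG : IsMaxOuterplanar G) {u v : Fin n} (hu : u ≠ k)
    (hv : v ≠ k) :
    G.Adj u v ↔ (v - k).val = (u - k).val + 1 ∨ (u - k).val = (v - k).val + 1 := by
  -- a chord `u v` skipping a position would cross the edge from `k` to the first skipped vertex
  have consecutive : ∀ {u v : Fin n}, u ≠ k → G.Adj u v → (u - k).val < (v - k).val →
      (v - k).val = (u - k).val + 1 := by
    intro u v hu huv hlt
    by_contra hne
    obtain ⟨w, hw⟩ := Fin.exists_val_sub_eq k (t := (u - k).val + 1) (by omega)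
    have hwk : k ≠ w := by rintro rfl; simp at hw
    have hvk : v ≠ k := by rintro rfl; simp at hlt
    have := Fin.val_sub_add_val_sub k w u
    have := Fin.val_sub_add_val_sub k v u
    have := Fin.val_sub_add_val_sub k u v
    have := Fin.val_sub_add_val_sub_of_ne hu
    have := Fin.val_sub_add_val_sub_of_ne hvk
    exact hG.not_crossing huv (hk hwk).symm ⟨by omega, by omega⟩ ⟨by omega, by omega⟩
  have hu0 : (u - k).val ≠ 0 := by simpa [sub_eq_zero] using hu
  have hv0 : (v - k).val ≠ 0 := by simpa [sub_eq_zero] using hv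
  have := Fin.val_sub_add_val_sub k v u
  have := Fin.val_sub_add_val_sub k u v
  constructor
  · intro h
    rcases lt_or_gt_of_ne (show (u - k).val ≠ (v - k).val by
      rw [Ne, ← Fin.eq_iff_val_sub_eq]; exact h.ne) with hlt | hlt
    · exact Or.inl (consecutive hu h hlt)
    · exact Or.inr (consecutive hv h.symm hlt)
  · rintro (h | h)
    · exact hG.adj_of_val_sub_eq_one (by omega)
    · exact (hG.adj_of_val_sub_eq_one (by omega)).symm

theorem eq_or_eq_of_twoChord (hk : G.IsUniversal k) (hn : 3 < n) (hG : IsMaxOuterplanar G)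
    {u v : Fin n} (huv : G.Adj u v) (h2 : (v - u).val = 2) : k = u ∨ k = v := by
  by_contra! hne
  have := (hk.adj_iff hG hne.1.symm hne.2.symm).1 huv
  have := Fin.val_sub_add_val_sub k v u
  omega

theorem not_hasDisjointTwoChords (hk : G.IsUniversal k) (hn : 3 < n) (hG : IsMaxOuterplanar G) :
    ¬HasDisjointTwoChords G := by
  refine not_hasDisjointTwoChords_iff.2 fun a b c d hab hcd hab' hcd' => ?_
  rcases hk.eq_or_eq_of_twoChord hn hG hab' hab with rfl | rfl <;>
    rcases hk.eq_or_eq_of_twoChord hn hG hcd' hcd with h | h <;> simp [h]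

theorem nonempty_iso_fan (hk : G.IsUniversal k) (hG : IsMaxOuterplanar G) :
    Nonempty (G ≃g joinGraph (⊥ : SimpleGraph Unit) (pathGraph (n - 1))) := by
  have hpos : ∀ v, v ≠ k → 0 < (v - k).val := fun v hv => by
    simpa [Nat.pos_iff_ne_zero, sub_eq_zero] using hv
  let toFan (v : Fin n) : Unit ⊕ Fin (n - 1) :=
    if hv : v = k then .inl () else .inr ⟨(v - k).val - 1, by omega⟩
  let ofFan : Unit ⊕ Fin (n - 1) → Fin n :=
    Sum.elim (fun _ => k) (fun i => k + ⟨i.val + 1, by omega⟩)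
  have ofFan_inr (i : Fin (n - 1)) : (ofFan (.inr i) - k).val = i.val + 1 := by simp [ofFan]
  have toFan_of_ne {v : Fin n} (hv : v ≠ k) : toFan v = .inr ⟨(v - k).val - 1, by omega⟩ :=
    dif_neg hv
  refine ⟨⟨⟨toFan, ofFan, fun v => ?_, fun x => ?_⟩, fun {u v} => ?_⟩⟩
  · by_cases hv : v = k
    · simp [toFan, ofFan, hv]
    · rw [toFan_of_ne hv, Fin.eq_iff_val_sub_eq k, ofFan_inr]
      have := hpos v hv
      simp only
      omega
  · rcases x with ⟨⟩ | i
    · simp [toFan, ofFan]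
    · have hne : ofFan (.inr i) ≠ k := fun h => by simpa [h] using ofFan_inr i
      rw [toFan_of_ne hne]
      simp [ofFan_inr]
  · simp only [Equiv.coe_fn_mk]
    by_cases hu : u = k <;> by_cases hv : v = k
    · subst hu hv; simp [toFan, joinGraph]
    · subst hu; simp [toFan, joinGraph, hv, hk (Ne.symm hv)]
    · subst hv; simp [toFan, joinGraph, hu, (hk (Ne.symm hu)).symm]
    · rw [toFan_of_ne hu, toFan_of_ne hv, hk.adj_iff hG hu hv]
      have := hpos u hu
      have := hpos v hv
      show (pathGraph (n - 1)).Adj _ _ ↔ _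
      rw [pathGraph_adj]
      simp only
      omega

end SimpleGraph.IsUniversal

theorem SimpleGraph.Iso.exists_isUniversal_of_join {V W : Type*} {G : SimpleGraph V}
    {H : SimpleGraph W} (e : G ≃g joinGraph (⊥ : SimpleGraph Unit) H) : ∃ k, G.IsUniversal k := by
  refine ⟨e.symm (.inl ()), fun j hj => ?_⟩
  rw [← e.map_rel_iff, e.apply_symm_apply]
  rcases hx : e j with _ | x
  · exact absurd (e.symm_apply_eq.2 hx.symm) hj
  · trivial

/-- A maximal outerplanar graph of order `n ≥ 7` either has two vertex-disjoint
2-chords, or is isomorphic to the fan `K 1 + P (n-1)`, and not both. -/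
theorem maxOuterplanar_dichotomy (n : ℕ) (hn : 7 ≤ n) (G : SimpleGraph (Fin n))
    (hG : IsMaxOuterplanar G) :
    Xor'
      (∃ a b c d : Fin n, (b : ℕ) = ((a : ℕ) + 2) % n ∧ (d : ℕ) = ((c : ℕ) + 2) % n ∧
        G.Adj a b ∧ G.Adj c d ∧ a ≠ c ∧ a ≠ d ∧ b ≠ c ∧ b ≠ d)
      (Nonempty (G ≃g joinGraph (⊥ : SimpleGraph Unit) (pathGraph (n - 1)))) := by
  have : NeZero n := ⟨by omega⟩
  refine xor_iff_iff_not.2 ?_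
  rw [← hasDisjointTwoChords_iff (by omega)]
  constructor
  · rintro hdisj ⟨e⟩
    obtain ⟨k, hk⟩ := e.exists_isUniversal_of_join
    exact hk.not_hasDisjointTwoChords (by omega) hG hdisj
  · intro hfan
    by_contra hdisj
    obtain ⟨k, hk⟩ := hG.exists_isUniversal hn hdisj
    exact hfan (hk.nonempty_iso_fan hG)
end
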